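/- arXiv:1801.01389 — 2 statements merged into one kernel-verified Lean document; each statement's English description precedes it below -/
import Mathlib

section
/- For a₀ > 0 and ℓ > 0, let k > 0 be the smallest positive solution of k N ℓ = tan(k(Nℓ − a₀)), where N is large enough that a₀/(Nℓ) is sufficiently small. Then there exists C > 0 such that (3a₀/(Nℓ)³)(1 + (9/5)(a₀/(Nℓ)) − C (a₀/(Nℓ))²) ≤ k² ≤ (3a₀/(Nℓ)³)(1 + (9/5)(a₀/(Nℓ)) + C (a₀/(Nℓ))²). -/
/-!
Put `x = k (Nℓ - a₀)` and `δ = a₀ / (Nℓ - a₀)`, so that the equation reads `tan x = (1 + δ) x`.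
Since `arctan ∘ u - id` is monotone when `1 + u² ≤ u'` (antitone when `u' ≤ 1 + u²`), comparing
`tan` with the ODE `u' = 1 + u²` gives
`x + x³/3 + 2x⁵/15 ≤ tan x ≤ x + x³/3 + 2x⁵/15 + x⁷/5` on `[0, 1]`.
By the intermediate value theorem there is a root in `(0, 1]`, so the smallest one satisfies
`x²/3 + 2x⁴/15 ≤ δ ≤ x²/3 + 2x⁴/15 + x⁶/5`; reverting this series gives
`x² = 3δ - 18δ²/5 + O(δ³)`, and `(k Nℓ)² = x² (1 + δ)²` with `a₀/(Nℓ) = δ/(1 + δ)` gives the claim.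
-/

open Real Set

namespace Real

theorem le_tan_of_deriv_le_one_add_sq {u u' : ℝ → ℝ} {x : ℝ} (hx₀ : 0 ≤ x) (hx : x < π / 2)
    (hu : ∀ y ∈ Icc 0 x, HasDerivAt u (u' y) y) (h₀ : u 0 = 0)
    (h : ∀ y ∈ Icc 0 x, u' y ≤ 1 + u y ^ 2) : u x ≤ tan x := by
  have hF : ∀ y ∈ Icc 0 x, HasDerivAt (fun y => y - arctan (u y))
      (1 - 1 / (1 + u y ^ 2) * u' y) y := fun y hy => (hasDerivAt_id y).sub (hu y hy).arctan
  have hmono : MonotoneOn (fun y => y - arctan (u y)) (Icc 0 x) := by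
    refine monotoneOn_of_hasDerivWithinAt_nonneg (convex_Icc 0 x)
      (fun y hy => (hF y hy).continuousAt.continuousWithinAt)
      (fun y hy => (hF y (interior_subset hy)).hasDerivWithinAt) fun y hy => ?_
    rw [sub_nonneg, one_div_mul_eq_div, div_le_one (by positivity)]
    exact h y (interior_subset hy)
  have := hmono ⟨le_rfl, hx₀⟩ ⟨hx₀, le_rfl⟩ hx₀
  simp only [h₀, arctan_zero, sub_zero] at this
  rw [← arctan_strictMono.le_iff_le, arctan_tan (by linarith [pi_pos]) hx]
  linarith

theorem tan_le_of_one_add_sq_le_deriv {u u' : ℝ → ℝ} {x : ℝ} (hx₀ : 0 ≤ x) (hx : x < π / 2)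
    (hu : ∀ y ∈ Icc 0 x, HasDerivAt u (u' y) y) (h₀ : u 0 = 0)
    (h : ∀ y ∈ Icc 0 x, 1 + u y ^ 2 ≤ u' y) : tan x ≤ u x := by
  have hF : ∀ y ∈ Icc 0 x, HasDerivAt (fun y => arctan (u y) - y)
      (1 / (1 + u y ^ 2) * u' y - 1) y := fun y hy => (hu y hy).arctan.sub (hasDerivAt_id y)
  have hmono : MonotoneOn (fun y => arctan (u y) - y) (Icc 0 x) := by
    refine monotoneOn_of_hasDerivWithinAt_nonneg (convex_Icc 0 x)
      (fun y hy => (hF y hy).continuousAt.continuousWithinAt)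
      (fun y hy => (hF y (interior_subset hy)).hasDerivWithinAt) fun y hy => ?_
    rw [sub_nonneg, one_div_mul_eq_div, one_le_div (by positivity)]
    exact h y (interior_subset hy)
  have := hmono ⟨le_rfl, hx₀⟩ ⟨hx₀, le_rfl⟩ hx₀
  simp only [h₀, arctan_zero, sub_zero] at this
  rw [← arctan_strictMono.le_iff_le, arctan_tan (by linarith [pi_pos]) hx]
  linarith

theorem quintic_taylor_le_tan {x : ℝ} (hx₀ : 0 ≤ x) (hx : x < π / 2) :
    x + x ^ 3 / 3 + 2 * x ^ 5 / 15 ≤ tan x := by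
  refine le_tan_of_deriv_le_one_add_sq (u := fun y => y + y ^ 3 / 3 + 2 * y ^ 5 / 15)
    (u' := fun y => 1 + y ^ 2 + 2 * y ^ 4 / 3) hx₀ hx (fun y _ => ?_) (by norm_num) fun y _ => ?_
  · exact (((hasDerivAt_id y).add ((hasDerivAt_pow 3 y).div_const 3)).add
      (((hasDerivAt_pow 5 y).const_mul 2).div_const 15)).congr_deriv (by norm_num; ring)
  · have : 0 ≤ y ^ 6 * (17 / 45 + 4 * y ^ 2 / 45 + 4 * y ^ 4 / 225) := by positivity
    linear_combination this

theorem tan_le_quintic_taylor_add {x : ℝ} (hx₀ : 0 ≤ x) (hx : x ≤ 1) :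
    tan x ≤ x + x ^ 3 / 3 + 2 * x ^ 5 / 15 + x ^ 7 / 5 := by
  refine tan_le_of_one_add_sq_le_deriv
    (u := fun y => y + y ^ 3 / 3 + 2 * y ^ 5 / 15 + y ^ 7 / 5)
    (u' := fun y => 1 + y ^ 2 + 2 * y ^ 4 / 3 + 7 * y ^ 6 / 5) hx₀
    (by linarith [pi_gt_three]) (fun y _ => ?_) (by norm_num) fun y hy => ?_
  · exact ((((hasDerivAt_id y).add ((hasDerivAt_pow 3 y).div_const 3)).add
      (((hasDerivAt_pow 5 y).const_mul 2).div_const 15)).add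
      ((hasDerivAt_pow 7 y).div_const 5)).congr_deriv (by norm_num; ring)
  · have hy2 : y ^ 2 ≤ 1 := pow_le_one₀ hy.1 (hy.2.trans hx)
    have : 0 ≤ y ^ 6 * (7 / 5 - 17 / 45 - 22 / 45 * y ^ 2 - 34 / 225 * (y ^ 2) ^ 2
        - 4 / 75 * (y ^ 2) ^ 3 - (y ^ 2) ^ 4 / 25) := by
      have := pow_le_one₀ (sq_nonneg y) hy2 (n := 2)
      have := pow_le_one₀ (sq_nonneg y) hy2 (n := 3)
      have := pow_le_one₀ (sq_nonneg y) hy2 (n := 4)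
      exact mul_nonneg (by positivity) (by linarith)
    linear_combination this

end Real

theorem exists_tan_eq_mul_mem_Ioc {r : ℝ} (hr₁ : 1 < r) (hr : r ≤ 22 / 15) :
    ∃ u ∈ Ioc 0 1, tan u = r * u := by
  set u₁ := √(r - 1)
  have hu₁ : 0 < u₁ := sqrt_pos.mpr (by linarith)
  have hu₁sq : u₁ ^ 2 = r - 1 := sq_sqrt (by linarith)
  have hu₁le : u₁ ≤ 1 := by nlinarith
  have hpi : 1 < π / 2 := by linarith [pi_gt_three]
  have hcont : ContinuousOn (fun u => tan u - r * u) (Icc u₁ 1) :=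
    (continuousOn_tan_Ioo.mono fun u hu => ⟨by linarith [hu.1], by linarith [hu.2]⟩).sub
      (continuousOn_const.mul continuousOn_id)
  have hle : tan u₁ - r * u₁ ≤ 0 := by
    have := tan_le_quintic_taylor_add hu₁.le hu₁le
    have := pow_le_one₀ (sq_nonneg u₁) (by nlinarith : u₁ ^ 2 ≤ 1) (n := 2)
    nlinarith [pow_pos hu₁ 3]
  have hge : 0 ≤ tan 1 - r * 1 := by linarith [quintic_taylor_le_tan zero_le_one hpi]
  obtain ⟨u, hu, hu0⟩ := intermediate_value_Icc hu₁le hcont ⟨hle, hge⟩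
  exact ⟨u, ⟨hu₁.trans_le hu.1, hu.2⟩, by linarith [show tan u - r * u = 0 from hu0]⟩

theorem abs_sub_series_reversion_le {s δ : ℝ} (hs₀ : 0 ≤ s) (hs₁ : s ≤ 1)
    (hlo : s / 3 + 2 * s ^ 2 / 15 ≤ δ) (hhi : δ ≤ s / 3 + 2 * s ^ 2 / 15 + s ^ 3 / 5) :
    |s - (3 * δ - 18 / 5 * δ ^ 2)| ≤ 22 * δ ^ 3 := by
  have hsδ : s ≤ 3 * δ := by nlinarith
  have hgap : 3 * δ - s ≤ s ^ 2 := by nlinarith [pow_le_one₀ hs₀ hs₁ (n := 3)]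
  have hs3 : s ^ 3 ≤ 27 * δ ^ 3 := by nlinarith [pow_le_pow_left₀ hs₀ hsδ 3]
  have hsq : 9 * δ ^ 2 - s ^ 2 ≤ 54 * δ ^ 3 := by
    nlinarith [mul_le_mul hgap (by linarith : 3 * δ + s ≤ 6 * δ) (by linarith) (sq_nonneg s),
      mul_le_mul_of_nonneg_right (pow_le_pow_left₀ hs₀ hsδ 2) (by linarith : (0:ℝ) ≤ 6 * δ)]
  rw [abs_le]
  constructor <;> nlinarith

theorem abs_mul_one_add_sq_sub_le {s δ t : ℝ} (hδ₀ : 0 < δ) (hδ : δ ≤ 1 / 9)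
    (ht : t * (1 + δ) = δ) (hs : |s - (3 * δ - 18 / 5 * δ ^ 2)| ≤ 22 * δ ^ 3) :
    |s * (1 + δ) ^ 2 - 3 * t * (1 + 9 / 5 * t)| ≤ 300 * t ^ 3 := by
  have hD : 0 < 1 + δ := by linarith
  have hq₀ : 0 ≤ 18 / 5 - 6 * δ - 21 * δ ^ 2 - 15 * δ ^ 3 - 18 / 5 * δ ^ 4 := by
    nlinarith [pow_le_pow_left₀ hδ₀.le hδ 2, pow_le_pow_left₀ hδ₀.le hδ 3,
      pow_le_pow_left₀ hδ₀.le hδ 4]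
  have hq₁ : 18 / 5 - 6 * δ - 21 * δ ^ 2 - 15 * δ ^ 3 - 18 / 5 * δ ^ 4 ≤ 18 / 5 := by
    nlinarith [pow_pos hδ₀ 2, pow_pos hδ₀ 3, pow_pos hδ₀ 4]
  have hD₅ : (1 + δ) ^ 5 ≤ 2 :=
    calc (1 + δ) ^ 5 ≤ (10 / 9) ^ 5 := pow_le_pow_left₀ hD.le (by linarith) 5
      _ ≤ 2 := by norm_num
  -- the terms of order `δ` and `δ²` cancel
  have hE : (s * (1 + δ) ^ 2 - 3 * t * (1 + 9 / 5 * t)) * (1 + δ) ^ 3 =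
      (s - (3 * δ - 18 / 5 * δ ^ 2)) * (1 + δ) ^ 5 +
        δ ^ 3 * (18 / 5 - 6 * δ - 21 * δ ^ 2 - 15 * δ ^ 3 - 18 / 5 * δ ^ 4) := by
    rw [eq_div_of_mul_eq hD.ne' ht]; field_simp; ring
  have hscale : 300 * t ^ 3 * (1 + δ) ^ 3 = 300 * δ ^ 3 := by
    rw [mul_assoc, ← mul_pow, ht]
  obtain ⟨he₁, he₂⟩ := abs_le.mp hs
  have hD₅₀ : 0 ≤ (1 + δ) ^ 5 := by positivity
  have hδ₃ : 0 < δ ^ 3 := by positivity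
  have key : |(s * (1 + δ) ^ 2 - 3 * t * (1 + 9 / 5 * t)) * (1 + δ) ^ 3| ≤
      300 * t ^ 3 * (1 + δ) ^ 3 := by
    rw [hE, hscale, abs_le]
    constructor <;>
      nlinarith [mul_le_mul_of_nonneg_right he₁ hD₅₀, mul_le_mul_of_nonneg_right he₂ hD₅₀,
        mul_le_mul_of_nonneg_left hD₅ hδ₃.le, mul_nonneg hδ₃.le hq₀,
        mul_le_mul_of_nonneg_left hq₁ hδ₃.le]
  rw [abs_mul, abs_of_pos (pow_pos hD 3)] at key
  exact le_of_mul_le_mul_right key (pow_pos hD 3)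

theorem abs_sq_sub_le_of_tan_eq {x δ : ℝ} (hx₀ : 0 < x) (hx₁ : x ≤ 1)
    (h : tan x = (1 + δ) * x) : |x ^ 2 - (3 * δ - 18 / 5 * δ ^ 2)| ≤ 22 * δ ^ 3 := by
  have hlo := quintic_taylor_le_tan hx₀.le (hx₁.trans_lt (by linarith [pi_gt_three]))
  have hhi := tan_le_quintic_taylor_add hx₀.le hx₁
  rw [h] at hlo hhi
  refine abs_sub_series_reversion_le (sq_nonneg x) (pow_le_one₀ hx₀.le hx₁) ?_ ?_
  · refine le_of_mul_le_mul_right ?_ hx₀; linear_combination hlo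
  · refine le_of_mul_le_mul_right ?_ hx₀; linear_combination hhi

theorem abs_sq_sub_le_of_isLeast_tan_root {x δ : ℝ} (hδ₀ : 0 < δ) (hδ : δ ≤ 7 / 15)
    (hx₀ : 0 < x) (hx : tan x = (1 + δ) * x)
    (hmin : ∀ y, 0 < y → tan y = (1 + δ) * y → x ≤ y) :
    |x ^ 2 - (3 * δ - 18 / 5 * δ ^ 2)| ≤ 22 * δ ^ 3 := by
  obtain ⟨u, ⟨hu₀, hu₁⟩, hu⟩ := exists_tan_eq_mul_mem_Ioc (r := 1 + δ) (by linarith) (by linarith)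
  exact abs_sq_sub_le_of_tan_eq hx₀ ((hmin u hu₀ hu).trans hu₁) hx

/-- Asymptotics of the smallest positive solution of `kNℓ = tan(k(Nℓ − a₀))` in the regime
`a₀/(Nℓ) → 0`. -/
theorem smallest_tan_root_asymptotics (a₀ ℓ : ℝ) (ha : 0 < a₀) (hℓ : 0 < ℓ) :
    ∃ C > 0, ∃ ε > 0, ∀ N : ℝ, 0 < N → a₀ / (N * ℓ) < ε →
      ∀ k : ℝ, 0 < k →
        k * (N * ℓ) = Real.tan (k * (N * ℓ - a₀)) →
        (∀ k' : ℝ, 0 < k' → k' * (N * ℓ) = Real.tan (k' * (N * ℓ - a₀)) → k ≤ k') →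
        (3 * a₀ / (N * ℓ) ^ 3) * (1 + (9 / 5) * (a₀ / (N * ℓ)) - C * (a₀ / (N * ℓ)) ^ 2)
            ≤ k ^ 2 ∧
          k ^ 2 ≤ (3 * a₀ / (N * ℓ) ^ 3)
            * (1 + (9 / 5) * (a₀ / (N * ℓ)) + C * (a₀ / (N * ℓ)) ^ 2) := by
  refine ⟨100, by norm_num, 1 / 10, by norm_num, fun N hN ht k hk hroot hmin => ?_⟩
  have hL : 0 < N * ℓ := mul_pos hN hℓ
  generalize N * ℓ = L at *
  have htL : a₀ / L * L = a₀ := div_mul_cancel₀ a₀ hL.ne'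
  generalize a₀ / L = t at *
  have hLa : 0 < L - a₀ := by nlinarith
  obtain ⟨δ, hδL⟩ : ∃ δ, (1 + δ) * (L - a₀) = L := ⟨a₀ / (L - a₀), by field_simp; ring⟩
  have hδ₀ : 0 < δ := by nlinarith
  have hδ : δ ≤ 1 / 9 := by nlinarith
  have htδ : t * (1 + δ) = δ :=
    mul_right_cancel₀ hLa.ne' (by linear_combination t * hδL + htL - hδL)
  have hroot_iff : ∀ k', k' * L = tan (k' * (L - a₀)) ↔
      tan (k' * (L - a₀)) = (1 + δ) * (k' * (L - a₀)) := fun k' => by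
    rw [eq_comm, mul_left_comm, hδL]
  have hx := abs_sq_sub_le_of_isLeast_tan_root hδ₀ (by linarith) (mul_pos hk hLa)
    ((hroot_iff k).1 hroot) fun y hy hyroot => by
      have := hmin (y / (L - a₀)) (div_pos hy hLa)
        ((hroot_iff _).2 (by simpa only [div_mul_cancel₀ _ hLa.ne'] using hyroot))
      rwa [le_div_iff₀ hLa] at this
  have hY := abs_mul_one_add_sq_sub_le hδ₀ hδ htδ hx
  rw [show (k * (L - a₀)) ^ 2 * (1 + δ) ^ 2 = k ^ 2 * L ^ 2 by
    linear_combination k ^ 2 * ((1 + δ) * (L - a₀) + L) * hδL] at hY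
  obtain ⟨hY₁, hY₂⟩ := abs_le.mp hY
  have hscale : ∀ c : ℝ, 3 * a₀ / L ^ 3 * c = 3 * t * c / L ^ 2 := fun c => by
    rw [← htL]; field_simp
  rw [hscale, hscale, div_le_iff₀ (by positivity), le_div_iff₀ (by positivity)]
  constructor <;> linarith
end

section
/- Let m_λ : [0, Nℓ] → ℝ be given for r ∈ (R, Nℓ] by m_λ(r) = λ^{−1/2} sin(λ^{1/2}(r − Nℓ)) + Nℓ cos(λ^{1/2}(r − Nℓ)), where λ = (3a₀/(Nℓ)³)(1 + O(a₀/(Nℓ))). Then, as a₀/(Nℓ) → 0, m_λ(r) = r − a₀ + (3/2)(a₀/(Nℓ)) r − (1/2)(a₀/(Nℓ)³) r³ + O(a₀²/(Nℓ)) uniformly for r ∈ (R, Nℓ]. -/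
/-!
The Taylor expansions `sin y = y - y³/6 + O(y⁵)` and `cos y = 1 - y²/2 + O(y⁴)`, which hold with
explicit constants for `|y| ≤ 1`, turn `m_λ(r)` into `r - λ (r - Nℓ)² (r + 2Nℓ) / 6` up to an
error of order `λ² (Nℓ)⁵`, which is `O(a₀² / Nℓ)` once `λ (Nℓ)² ≤ 1`. The target polynomial is
the same cubic with `λ` replaced by `μ = 3a₀/(Nℓ)³`, and the cubic is bounded by `3 (Nℓ)³` on
`[0, Nℓ]`, so the discrepancy `|λ - μ| = O(a₀ μ / Nℓ)` costs another `O(a₀² / Nℓ)`.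
-/

open Real

noncomputable def neumannSolution (lam L r : ℝ) : ℝ :=
  (√lam)⁻¹ * sin (√lam * (r - L)) + L * cos (√lam * (r - L))

lemma abs_inv_mul_sin_add_mul_cos_sub_le {s L x : ℝ} (hs : 0 < s) (hx : |x| ≤ L)
    (hsL : s * L ≤ 1) :
    |s⁻¹ * sin (s * x) + L * cos (s * x) - (x + L - s ^ 2 * x ^ 2 * (x + 3 * L) / 6)|
      ≤ s ^ 4 * L ^ 5 / 10 := by
  have hy : |s * x| ≤ s * L := by
    rw [abs_mul, abs_of_pos hs]; exact mul_le_mul_of_nonneg_left hx hs.le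
  have hsin := sin_bound (hy.trans hsL)
  have hcos := cos_bound (hy.trans hsL)
  have hL : 0 ≤ L := (abs_nonneg x).trans hx
  have hexpand : s⁻¹ * sin (s * x) + L * cos (s * x) - (x + L - s ^ 2 * x ^ 2 * (x + 3 * L) / 6)
      = s⁻¹ * (sin (s * x) - (s * x - (s * x) ^ 3 / 6))
        + L * (cos (s * x) - (1 - (s * x) ^ 2 / 2)) := by
    field_simp
    ring
  have hy5 : |s * x| ^ 5 ≤ (s * L) ^ 5 := pow_le_pow_left₀ (abs_nonneg _) hy 5
  have hy4 : |s * x| ^ 4 ≤ (s * L) ^ 4 := pow_le_pow_left₀ (abs_nonneg _) hy 4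
  rw [hexpand]
  calc _ ≤ |s⁻¹ * (sin (s * x) - (s * x - (s * x) ^ 3 / 6))|
          + |L * (cos (s * x) - (1 - (s * x) ^ 2 / 2))| := abs_add_le _ _
    _ ≤ s⁻¹ * ((s * L) ^ 5 / 100) + L * ((s * L) ^ 4 * (5 / 96)) := by
        rw [abs_mul, abs_mul, abs_inv, abs_of_pos hs, abs_of_nonneg hL]
        gcongr
        exacts [hsin.trans (by linarith), hcos.trans (by linarith)]
    _ ≤ s ^ 4 * L ^ 5 / 10 := by
        field_simp
        nlinarith [pow_nonneg hL 5]

lemma abs_neumannSolution_sub_le {lam L r : ℝ} (μ : ℝ) (hlam : 0 < lam) (hr : 0 ≤ r)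
    (hrL : r ≤ L) (hsmall : lam * L ^ 2 ≤ 1) :
    |neumannSolution lam L r - (r - μ * (r - L) ^ 2 * (r + 2 * L) / 6)|
      ≤ |lam - μ| * L ^ 3 / 2 + lam ^ 2 * L ^ 5 / 10 := by
  have hs : 0 < √lam := sqrt_pos.2 hlam
  have hsq : √lam ^ 2 = lam := sq_sqrt hlam.le
  have hL : 0 ≤ L := hr.trans hrL
  have hx : |r - L| ≤ L := abs_le.2 ⟨by linarith, by linarith⟩
  have hsL : √lam * L ≤ 1 := by
    rw [← abs_of_nonneg (by positivity : 0 ≤ √lam * L)]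
    exact abs_le_one_iff_mul_self_le_one.2 (by nlinarith)
  have htaylor := abs_inv_mul_sin_add_mul_cos_sub_le hs hx hsL
  have hs4 : √lam ^ 4 = lam ^ 2 := by rw [show √lam ^ 4 = (√lam ^ 2) ^ 2 by ring, hsq]
  rw [hsq, hs4, sub_add_cancel, show r - L + 3 * L = r + 2 * L by ring] at htaylor
  have hcubic : (r - L) ^ 2 * (r + 2 * L) ≤ 3 * L ^ 3 :=
    calc _ ≤ L ^ 2 * (3 * L) := mul_le_mul (sq_le_sq' (by linarith) (by linarith))
          (by linarith) (by linarith) (sq_nonneg L)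
      _ = 3 * L ^ 3 := by ring
  have hcubic₀ : 0 ≤ (r - L) ^ 2 * (r + 2 * L) := by positivity
  calc _ = |(neumannSolution lam L r - (r - lam * (r - L) ^ 2 * (r + 2 * L) / 6))
          - (lam - μ) * ((r - L) ^ 2 * (r + 2 * L)) / 6| := by
          congr 1; ring
    _ ≤ |neumannSolution lam L r - (r - lam * (r - L) ^ 2 * (r + 2 * L) / 6)|
          + |lam - μ| * ((r - L) ^ 2 * (r + 2 * L)) / 6 := by
          refine (abs_sub _ _).trans (le_of_eq ?_)
          rw [abs_div, abs_mul, abs_of_nonneg hcubic₀, abs_of_pos (by norm_num : (0 : ℝ) < 6)]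
    _ ≤ lam ^ 2 * L ^ 5 / 10 + |lam - μ| * (3 * L ^ 3) / 6 := by gcongr; exact htaylor
    _ = _ := by ring

lemma cubic_correction_eq {a L : ℝ} (r : ℝ) (hL : L ≠ 0) :
    r - a + 3 / 2 * (a / L) * r - 1 / 2 * (a / L ^ 3) * r ^ 3
      = r - 3 * a / L ^ 3 * (r - L) ^ 2 * (r + 2 * L) / 6 := by
  field_simp
  ring

lemma eigenvalue_le_of_abs_sub_le {a L D lam : ℝ} (ha : 0 < a) (hL : 0 < L) (hD : 0 < D)
    (hq : a / L < 1 / (3 * (1 + D)))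
    (hlam : |lam - 3 * a / L ^ 3| ≤ D * (a / L) * (3 * a / L ^ 3)) :
    lam * L ^ 2 ≤ 1 ∧ lam ≤ (1 + D) * (3 * a / L ^ 3) := by
  have hq0 : 0 < a / L := by positivity
  have h3q : 3 * (a / L) * (1 + D) < 1 := by
    rw [lt_div_iff₀ (by positivity)] at hq; linarith
  have hq1 : a / L ≤ 1 := by nlinarith
  have hle : lam ≤ (1 + D * (a / L)) * (3 * a / L ^ 3) := by linarith [(abs_le.1 hlam).2]
  refine ⟨?_, hle.trans (by gcongr; nlinarith)⟩
  calc lam * L ^ 2 ≤ (1 + D * (a / L)) * (3 * a / L ^ 3) * L ^ 2 := by gcongr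
    _ = 3 * (a / L) * (1 + D * (a / L)) := by field_simp
    _ ≤ 1 := by nlinarith [mul_le_mul_of_nonneg_left hq1 (mul_nonneg hD.le hq0.le)]

/-- Uniform Taylor expansion of the explicit Neumann solution
`m_λ(r) = λ^{−1/2} sin(√λ(r − Nℓ)) + Nℓ cos(√λ(r − Nℓ))` in the regime `a₀/(Nℓ) → 0`,
where `λ = (3a₀/(Nℓ)³)(1 + O(a₀/(Nℓ)))`. -/
theorem neumann_solution_expansion (a₀ R D : ℝ) (ha : 0 < a₀) (hR : 0 < R) (hD : 0 < D) :
    ∃ C > 0, ∃ ε > 0, ∀ N ℓ : ℝ, 0 < N → 0 < ℓ → R < N * ℓ → a₀ / (N * ℓ) < ε →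
      ∀ lam : ℝ, 0 < lam →
        |lam - 3 * a₀ / (N * ℓ) ^ 3| ≤ D * (a₀ / (N * ℓ)) * (3 * a₀ / (N * ℓ) ^ 3) →
        ∀ r ∈ Set.Ioc R (N * ℓ),
          |(Real.sqrt lam)⁻¹ * Real.sin (Real.sqrt lam * (r - N * ℓ))
              + N * ℓ * Real.cos (Real.sqrt lam * (r - N * ℓ))
              - (r - a₀ + (3 / 2) * (a₀ / (N * ℓ)) * r - (1 / 2) * (a₀ / (N * ℓ) ^ 3) * r ^ 3)|
            ≤ C * a₀ ^ 2 / (N * ℓ) := by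
  refine ⟨3 / 2 * D + (1 + D) ^ 2, by positivity, 1 / (3 * (1 + D)), by positivity, ?_⟩
  intro N ℓ hN hℓ _ hq lam hlam hlamμ r ⟨hRr, hrL⟩
  set L := N * ℓ
  have hL : 0 < L := by positivity
  obtain ⟨hsmall, hlam_le⟩ := eigenvalue_le_of_abs_sub_le ha hL hD hq hlamμ
  rw [cubic_correction_eq r hL.ne']
  calc _ ≤ |lam - 3 * a₀ / L ^ 3| * L ^ 3 / 2 + lam ^ 2 * L ^ 5 / 10 :=
        abs_neumannSolution_sub_le _ hlam (hR.trans hRr).le hrL hsmall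
    _ ≤ D * (a₀ / L) * (3 * a₀ / L ^ 3) * L ^ 3 / 2
          + ((1 + D) * (3 * a₀ / L ^ 3)) ^ 2 * L ^ 5 / 10 := by gcongr
    _ = (3 / 2 * D + 9 / 10 * (1 + D) ^ 2) * a₀ ^ 2 / L := by
        field_simp
        ring
    _ ≤ _ := by gcongr; nlinarith [sq_nonneg (1 + D)]
end
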